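/- Theorem 3.1 (generalization bound with real and synthetic data). Let P₀ and P_g be probability measures on Z with P₀(Zᵢ) > 0 and P_g(Zᵢ) > 0 for every i ∈ {1,…,K}. Fix n ≥ 1, g ≥ 1 and δ > 0. Then with probability at least 1 − δ over the independent draws S = (s₁,…,s_n) ~ P₀^⊗n and G = (u₁,…,u_g) ~ P_g^⊗g, the following implication holds: if every entry of G lies in ⋃_{i ∈ T_S} Zᵢ and gᵢ := |Gᵢ| > 0 for every i ∈ T_S (where Gᵢ is the subtuple of G lying in Zᵢ), then F(P₀) ≤ L · Σ_{i ∈ T_S} (gᵢ/g) · [ d̄(Gᵢ, Sᵢ) + R(Gᵢ, Zᵢ | P_g) ] + F(P_g) + Σ_{i ∈ T_S} (nᵢ/n − gᵢ/g) · F(Sᵢ) + L · Σ_{i ∈ T_S} (nᵢ/n) · R(Sᵢ, Zᵢ | P₀) + C·(1/√n + 1/√g)·√(2K·ln 2 + 2·ln(2/δ)), where nᵢ = |Sᵢ|. -/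

import Mathlib

/-
Replace `ℓ` on each cell `Zᵢ` by its conditional mean under `P`. The glued function has the same
`P`-expectation as `ℓ`, takes values in `[0, C]`, and differs from `ℓ` at `s ∈ Zᵢ` by at most
`L · R(s, Zᵢ | P)`. Hoeffding's inequality for it, under `P₀` and under `P_g` at level `δ / 2`
each, bounds `F(P₀)` by its empirical mean over `S` and its empirical mean over `G` by `F(P_g)`.
The empirical mean over `S` is at most `∑ (nᵢ/n) (F(Sᵢ) + L · R(Sᵢ, Zᵢ | P₀))`; splitting
`nᵢ/n = (nᵢ/n - gᵢ/g) + gᵢ/g`, the Lipschitz condition trades `F(Sᵢ)` for `F(Gᵢ)` at the cost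
`L · d̄(Gᵢ, Sᵢ)`, and `F(Gᵢ)` is compared with the conditional means under `P_g` at the cost
`L · R(Gᵢ, Zᵢ | P_g)`.
-/

open MeasureTheory ProbabilityTheory

open Classical in
/-- The set of indices of the entries of the tuple `S` that lie in the region `A`. -/
noncomputable def idxIn {Z : Type*} {m : ℕ} (S : Fin m → Z) (A : Set Z) : Finset (Fin m) :=
  Finset.univ.filter fun j => S j ∈ A

open Classical in
/-- `T_S`: the set of indices `i` of regions `Zpart i` containing at least one entry of `S`. -/
noncomputable def TS {Z : Type*} {K m : ℕ} (Zpart : Fin K → Set Z) (S : Fin m → Z) :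
    Finset (Fin K) :=
  Finset.univ.filter fun i => (idxIn S (Zpart i)).Nonempty

/-- Empirical loss of `ℓ` on the subtuple of `S` indexed by `B`. -/
noncomputable def empLoss {Z : Type*} {m : ℕ} (ℓ : Z → ℝ) (S : Fin m → Z)
    (B : Finset (Fin m)) : ℝ :=
  (B.card : ℝ)⁻¹ * ∑ j ∈ B, ℓ (S j)

/-- Local robustness `R(s, A | P) = E_{z∼P}[‖h z − h s‖ | z ∈ A]`. -/
noncomputable def locRob {Z : Type*} [MeasurableSpace Z] {H : Type*} [NormedAddCommGroup H]
    (h : Z → H) (P : Measure Z) (A : Set Z) (s : Z) : ℝ :=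
  ∫ z, ‖h z - h s‖ ∂(P[|A])

/-- Local robustness of the subtuple of `S` indexed by `B`:
`R(S_B, A | P) = (1/|B|) ∑_{j∈B} R(S j, A | P)`. -/
noncomputable def tupRob {Z : Type*} [MeasurableSpace Z] {H : Type*} [NormedAddCommGroup H]
    (h : Z → H) (P : Measure Z) (A : Set Z) {m : ℕ} (S : Fin m → Z) (B : Finset (Fin m)) : ℝ :=
  (B.card : ℝ)⁻¹ * ∑ j ∈ B, locRob h P A (S j)

/-- `h`-based discrepancy `d̄(G_{BG}, S_{BS})` between the subtuple of `G` indexed by `BG`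
and the subtuple of `S` indexed by `BS`. -/
noncomputable def disc {Z : Type*} {H : Type*} [NormedAddCommGroup H] (h : Z → H)
    {k m : ℕ} (G : Fin k → Z) (BG : Finset (Fin k)) (S : Fin m → Z) (BS : Finset (Fin m)) : ℝ :=
  ((BG.card : ℝ) * (BS.card : ℝ))⁻¹ * ∑ u ∈ BG, ∑ s ∈ BS, ‖h (S s) - h (G u)‖

open Finset Real

section Hoeffding

variable {Ω : Type*} [MeasurableSpace Ω] (μ : Measure Ω) [IsProbabilityMeasure μ]
  {ψ : Ω → ℝ} {a b : ℝ}

lemma hasSubgaussianMGF_integral_sub_comp_eval {ι : Type*} [Fintype ι] (hψ : Measurable ψ)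
    (hab : ∀ z, ψ z ∈ Set.Icc a b) (j : ι) :
    HasSubgaussianMGF (fun S : ι → Ω => (∫ z, ψ z ∂μ) - ψ (S j)) ((‖b - a‖₊ / 2) ^ 2)
      (Measure.pi fun _ => μ) := by
  rw [← sub_sub_sub_cancel_left a b (∫ z, ψ z ∂μ)]
  refine hasSubgaussianMGF_of_mem_Icc_of_integral_eq_zero
    ((measurable_const.sub hψ).comp (measurable_pi_apply j)).aemeasurable
    (ae_of_all _ fun S => ⟨by linarith [(hab (S j)).2], by linarith [(hab (S j)).1]⟩) ?_
  have hψint : Integrable ψ μ := .of_mem_Icc a b hψ.aemeasurable (ae_of_all _ hab)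
  calc ∫ S, (∫ z, ψ z ∂μ) - ψ (S j) ∂Measure.pi (fun _ => μ)
      = ∫ z, (∫ z, ψ z ∂μ) - ψ z ∂(Measure.pi fun _ => μ).map (Function.eval j) := by
        rw [integral_map (measurable_pi_apply j).aemeasurable
          (measurable_const.sub hψ).aestronglyMeasurable]
    _ = 0 := by
        rw [(measurePreserving_eval _ j).map_eq, integral_sub (integrable_const _) hψint]
        simp

variable {n : ℕ} {ε : ℝ}

lemma measure_pi_integral_sub_avg_gt_le (hψ : Measurable ψ) (hab : ∀ z, ψ z ∈ Set.Icc a b)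
    (hn : 0 < n) (hε : 0 ≤ ε) :
    Measure.pi (fun _ : Fin n => μ) {S | (b - a) * ε < (∫ z, ψ z ∂μ) - (n : ℝ)⁻¹ * ∑ j, ψ (S j)}
      ≤ ENNReal.ofReal (exp (-2 * n * ε ^ 2)) := by
  have hn' : (n : ℝ) ≠ 0 := by positivity
  -- For `b = a` the sub-Gaussian bound is vacuous, but `ψ` is constant and the event is empty.
  rcases le_or_gt b a with hba | hab'
  · refine le_of_eq_of_le (measure_eq_zero_iff_ae_notMem.2 (ae_of_all _ fun S hS => ?_)) zero_le
    have hba' : b = a := le_antisymm hba ((hab (S ⟨0, hn⟩)).1.trans (hab (S ⟨0, hn⟩)).2)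
    have hconst : ∀ z, ψ z = a := fun z => le_antisymm (hba' ▸ (hab z).2) (hab z).1
    simp [hconst, hba', inv_mul_cancel_left₀ hn'] at hS
  have hsum : ∀ S : Fin n → Ω, ∑ j, ((∫ z, ψ z ∂μ) - ψ (S j))
      = n * ((∫ z, ψ z ∂μ) - (n : ℝ)⁻¹ * ∑ j, ψ (S j)) := fun S => by
    simp only [sum_sub_distrib, sum_const, card_univ, Fintype.card_fin, nsmul_eq_mul]
    field_simp
  have hsub : {S : Fin n → Ω | (b - a) * ε < (∫ z, ψ z ∂μ) - (n : ℝ)⁻¹ * ∑ j, ψ (S j)}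
      ⊆ {S | n * ((b - a) * ε) ≤ ∑ j, ((∫ z, ψ z ∂μ) - ψ (S j))} := fun S hS => by
    rw [Set.mem_ofPred_eq, hsum]
    exact mul_le_mul_of_nonneg_left hS.le n.cast_nonneg
  refine (measure_mono hsub).trans ?_
  rw [← ofReal_measureReal]
  refine ENNReal.ofReal_le_ofReal ((HasSubgaussianMGF.measure_sum_ge_le_of_iIndepFun
    (iIndepFun_pi fun _ => (measurable_const.sub hψ).aemeasurable)
    (fun j _ => hasSubgaussianMGF_integral_sub_comp_eval μ hψ hab j) (by positivity)).trans_eq ?_)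
  simp only [sum_const, card_univ, Fintype.card_fin, nsmul_eq_mul, NNReal.coe_mul,
    NNReal.coe_natCast, NNReal.coe_pow, NNReal.coe_div, coe_nnnorm, Real.norm_eq_abs,
    abs_of_pos (sub_pos.2 hab')]
  have hba0 : b - a ≠ 0 := (sub_pos.2 hab').ne'
  congr 1
  field_simp
  norm_num

lemma measure_pi_avg_sub_integral_gt_le (hψ : Measurable ψ) (hab : ∀ z, ψ z ∈ Set.Icc a b)
    (hn : 0 < n) (hε : 0 ≤ ε) :
    Measure.pi (fun _ : Fin n => μ) {S | (b - a) * ε < (n : ℝ)⁻¹ * ∑ j, ψ (S j) - ∫ z, ψ z ∂μ}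
      ≤ ENNReal.ofReal (exp (-2 * n * ε ^ 2)) := by
  convert measure_pi_integral_sub_avg_gt_le μ hψ.neg (a := -b) (b := -a)
    (fun z => ⟨neg_le_neg (hab z).2, neg_le_neg (hab z).1⟩) hn hε using 3
  simp only [Pi.neg_apply, integral_neg, sum_neg_distrib]
  ring_nf

end Hoeffding

lemma ofReal_exp_neg_two_mul_sq_le {m : ℕ} (hm : 0 < m) {E δ : ℝ} (hE : 0 ≤ E) (hδ : 0 < δ)
    (hEδ : log (2 / δ) ≤ 2 * E) :
    ENNReal.ofReal (exp (-2 * m * (√E / √m) ^ 2)) ≤ ENNReal.ofReal (δ / 2) := by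
  refine ENNReal.ofReal_le_ofReal ?_
  have hm' : (m : ℝ) ≠ 0 := by positivity
  rw [div_pow, sq_sqrt hE, sq_sqrt m.cast_nonneg, mul_assoc, mul_div_cancel₀ _ hm']
  calc exp (-2 * E) ≤ exp (-log (2 / δ)) := by gcongr; linarith
    _ = δ / 2 := by rw [exp_neg, exp_log (by positivity), inv_div]

lemma one_sub_add_le_prod_apply {α β : Type*} [MeasurableSpace α] [MeasurableSpace β]
    {μ : Measure α} {ν : Measure β} [IsProbabilityMeasure μ] [IsProbabilityMeasure ν]
    {A : Set α} {B : Set β} {T : Set (α × β)} (hT : ∀ x y, x ∉ A → y ∉ B → (x, y) ∈ T) :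
    1 - (μ A + ν B) ≤ μ.prod ν T := by
  have hcover : Set.univ ⊆ T ∪ A ×ˢ Set.univ ∪ Set.univ ×ˢ B := by
    rintro ⟨x, y⟩ -
    by_cases hx : x ∈ A
    · exact Or.inl (Or.inr ⟨hx, trivial⟩)
    by_cases hy : y ∈ B
    · exact Or.inr ⟨trivial, hy⟩
    · exact Or.inl (Or.inl (hT x y hx hy))
  rw [tsub_le_iff_right]
  calc 1 = μ.prod ν Set.univ := measure_univ.symm
    _ ≤ μ.prod ν (T ∪ A ×ˢ Set.univ ∪ Set.univ ×ˢ B) := measure_mono hcover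
    _ ≤ μ.prod ν T + μ.prod ν (A ×ˢ Set.univ) + μ.prod ν (Set.univ ×ˢ B) :=
        (measure_union_le _ _).trans (add_le_add_left (measure_union_le _ _) _)
    _ = μ.prod ν T + (μ A + ν B) := by simp [Measure.prod_prod, add_assoc]

section RegionalLoss

variable {Z : Type*} [MeasurableSpace Z] {H : Type*} [NormedAddCommGroup H]

open Classical in
/-- The conditional mean of `ℓ` on `A`, except where the local robustness is the junk value `0`
of a non-integrable integrand; there `ℓ` itself is kept. -/
noncomputable def regionalLoss (h : Z → H) (ℓ : Z → ℝ) (μ : Measure Z) (A : Set Z) : Z → ℝ :=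
  if Integrable (fun z => ‖h z‖) (μ[|A]) then fun _ => ∫ z, ℓ z ∂μ[|A] else ℓ

variable {h : Z → H} {ℓ : Z → ℝ} {μ : Measure Z} {A : Set Z}

lemma locRob_eq_zero_of_not_integrable [MeasurableSpace H] [BorelSpace H] (hh : Measurable h)
    [IsFiniteMeasure (μ[|A])] (hint : ¬ Integrable (fun z => ‖h z‖) (μ[|A])) (s : Z) :
    locRob h μ A s = 0 := by
  refine integral_undef fun hs => hint ?_
  refine (hs.add (integrable_const ‖h s‖)).mono' hh.norm.aestronglyMeasurable
    (ae_of_all _ fun z => ?_)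
  simpa using norm_le_norm_sub_add (h z) (h s)

lemma abs_integral_cond_sub_le_locRob [MeasurableSpace H] [BorelSpace H] (hh : Measurable h)
    [IsProbabilityMeasure (μ[|A])] {L : ℝ} (hLip : ∀ s u, |ℓ s - ℓ u| ≤ L * ‖h s - h u‖)
    (hℓ : Integrable ℓ (μ[|A])) (hint : Integrable (fun z => ‖h z‖) (μ[|A])) (s : Z) :
    |(∫ z, ℓ z ∂μ[|A]) - ℓ s| ≤ L * locRob h μ A s := by
  have hdist : Integrable (fun z => ‖h z - h s‖) (μ[|A]) :=
    (hint.add (integrable_const ‖h s‖)).mono'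
      ((continuous_id.sub continuous_const).norm.measurable.comp hh).aestronglyMeasurable
      (ae_of_all _ fun z => by simpa using norm_sub_le (h z) (h s))
  calc |(∫ z, ℓ z ∂μ[|A]) - ℓ s| = |∫ z, (ℓ z - ℓ s) ∂μ[|A]| := by
        rw [integral_sub hℓ (integrable_const _)]; simp
    _ ≤ ∫ z, |ℓ z - ℓ s| ∂μ[|A] := abs_integral_le_integral_abs
    _ ≤ ∫ z, L * ‖h z - h s‖ ∂μ[|A] :=
        integral_mono (hℓ.sub (integrable_const _)).abs (hdist.const_mul L) fun z => hLip z s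
    _ = L * locRob h μ A s := integral_const_mul L _

lemma abs_regionalLoss_sub_le [MeasurableSpace H] [BorelSpace H] (hh : Measurable h)
    (hℓ : Measurable ℓ) {a b : ℝ} (hab : ∀ z, ℓ z ∈ Set.Icc a b) [IsProbabilityMeasure (μ[|A])]
    {L : ℝ} (hLip : ∀ s u, |ℓ s - ℓ u| ≤ L * ‖h s - h u‖) (s : Z) :
    |regionalLoss h ℓ μ A s - ℓ s| ≤ L * locRob h μ A s := by
  unfold regionalLoss
  split_ifs with hint
  · exact abs_integral_cond_sub_le_locRob hh hLip
      (.of_mem_Icc a b hℓ.aemeasurable (ae_of_all _ hab)) hint s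
  · simp [locRob_eq_zero_of_not_integrable hh hint]

lemma regionalLoss_mem_Icc (hℓ : Measurable ℓ) {a b : ℝ} (hab : ∀ z, ℓ z ∈ Set.Icc a b)
    [IsProbabilityMeasure (μ[|A])] (s : Z) : regionalLoss h ℓ μ A s ∈ Set.Icc a b := by
  unfold regionalLoss
  split_ifs
  · have hint : Integrable ℓ (μ[|A]) := .of_mem_Icc a b hℓ.aemeasurable (ae_of_all _ hab)
    exact ⟨by simpa using integral_mono (integrable_const a) hint fun z => (hab z).1,
      by simpa using integral_mono hint (integrable_const b) fun z => (hab z).2⟩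
  · exact hab s

lemma setIntegral_regionalLoss [IsFiniteMeasure μ] (hA : μ A ≠ 0) :
    ∫ z in A, regionalLoss h ℓ μ A z ∂μ = ∫ z in A, ℓ z ∂μ := by
  unfold regionalLoss
  split_ifs
  · rw [setIntegral_const, ProbabilityTheory.cond, integral_smul_measure, smul_eq_mul,
      smul_eq_mul, ENNReal.toReal_inv, measureReal_def, mul_inv_cancel_left₀]
    exact ENNReal.toReal_ne_zero.2 ⟨hA, measure_ne_top μ A⟩
  · rfl

end RegionalLoss

lemma sum_indicator_eq_of_mem {Z ι : Type*} [Fintype ι] {Zpart : ι → Set Z}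
    (hdisj : Pairwise (Function.onFun Disjoint Zpart)) {i : ι} {z : Z}
    (hz : z ∈ Zpart i) (v : ι → Z → ℝ) : ∑ i', (Zpart i').indicator (v i') z = v i z := by
  rw [Fintype.sum_eq_single i fun i' hi' =>
    Set.indicator_of_notMem (Set.disjoint_left.1 (hdisj hi'.symm) hz) _]
  exact Set.indicator_of_mem hz _

section PartitionLoss

variable {Z : Type*} [MeasurableSpace Z] {H : Type*} [NormedAddCommGroup H]
  (h : Z → H) (ℓ : Z → ℝ) (μ : Measure Z) {ι : Type*} [Fintype ι] (Zpart : ι → Set Z)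

noncomputable def partitionLoss (z : Z) : ℝ :=
  ∑ i, (Zpart i).indicator (regionalLoss h ℓ μ (Zpart i)) z

variable {h ℓ μ Zpart}

lemma partitionLoss_eq_of_mem (hdisj : Pairwise (Function.onFun Disjoint Zpart)) {i : ι} {z : Z}
    (hz : z ∈ Zpart i) : partitionLoss h ℓ μ Zpart z = regionalLoss h ℓ μ (Zpart i) z :=
  sum_indicator_eq_of_mem hdisj hz _

lemma measurable_partitionLoss (hZ : ∀ i, MeasurableSet (Zpart i)) (hℓ : Measurable ℓ) :
    Measurable (partitionLoss h ℓ μ Zpart) := by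
  refine Finset.measurable_sum _ fun i _ => (Measurable.indicator ?_ (hZ i))
  unfold regionalLoss
  split_ifs
  exacts [measurable_const, hℓ]

variable [IsFiniteMeasure μ]

lemma partitionLoss_mem_Icc (hdisj : Pairwise (Function.onFun Disjoint Zpart))
    (hcover : ⋃ i, Zpart i = Set.univ) (hμ : ∀ i, μ (Zpart i) ≠ 0)
    (hℓ : Measurable ℓ) {a b : ℝ} (hab : ∀ z, ℓ z ∈ Set.Icc a b) (z : Z) :
    partitionLoss h ℓ μ Zpart z ∈ Set.Icc a b := by
  obtain ⟨i, hi⟩ := Set.mem_iUnion.1 (hcover ▸ Set.mem_univ z)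
  have := cond_isProbabilityMeasure (μ := μ) (hμ i)
  rw [partitionLoss_eq_of_mem hdisj hi]
  exact regionalLoss_mem_Icc hℓ hab z

lemma abs_partitionLoss_sub_le [MeasurableSpace H] [BorelSpace H] (hh : Measurable h)
    (hdisj : Pairwise (Function.onFun Disjoint Zpart)) (hμ : ∀ i, μ (Zpart i) ≠ 0)
    (hℓ : Measurable ℓ) {a b : ℝ} (hab : ∀ z, ℓ z ∈ Set.Icc a b) {L : ℝ}
    (hLip : ∀ s u, |ℓ s - ℓ u| ≤ L * ‖h s - h u‖) {i : ι} {s : Z} (hs : s ∈ Zpart i) :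
    |partitionLoss h ℓ μ Zpart s - ℓ s| ≤ L * locRob h μ (Zpart i) s := by
  have := cond_isProbabilityMeasure (μ := μ) (hμ i)
  rw [partitionLoss_eq_of_mem hdisj hs]
  exact abs_regionalLoss_sub_le hh hℓ hab hLip s

lemma integral_partitionLoss (hZ : ∀ i, MeasurableSet (Zpart i))
    (hdisj : Pairwise (Function.onFun Disjoint Zpart))
    (hcover : ⋃ i, Zpart i = Set.univ) (hμ : ∀ i, μ (Zpart i) ≠ 0)
    (hℓ : Measurable ℓ) {a b : ℝ} (hab : ∀ z, ℓ z ∈ Set.Icc a b) :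
    ∫ z, partitionLoss h ℓ μ Zpart z ∂μ = ∫ z, ℓ z ∂μ := by
  have hψ : Integrable (partitionLoss h ℓ μ Zpart) μ :=
    .of_mem_Icc a b (measurable_partitionLoss hZ hℓ).aemeasurable
      (ae_of_all _ (partitionLoss_mem_Icc hdisj hcover hμ hℓ hab))
  have hℓi : Integrable ℓ μ := .of_mem_Icc a b hℓ.aemeasurable (ae_of_all _ hab)
  rw [← setIntegral_univ, ← setIntegral_univ (f := ℓ), ← hcover,
    integral_iUnion_fintype hZ hdisj fun i => hψ.integrableOn,
    integral_iUnion_fintype hZ hdisj fun i => hℓi.integrableOn]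
  refine Finset.sum_congr rfl fun i _ => ?_
  rw [setIntegral_congr_fun (hZ i) fun z hz => partitionLoss_eq_of_mem hdisj hz]
  exact setIntegral_regionalLoss (hμ i)

end PartitionLoss

section Empirical

variable {Z : Type*} {ι : Type*} {Zpart : ι → Set Z} {m : ℕ}

lemma mem_idxIn {S : Fin m → Z} {A : Set Z} {j : Fin m} : j ∈ idxIn S A ↔ S j ∈ A := by
  simp [idxIn]

lemma sum_eq_sum_idxIn (hdisj : Pairwise (Function.onFun Disjoint Zpart)) {T : Finset ι}
    {S : Fin m → Z} (hST : ∀ j, S j ∈ ⋃ i ∈ T, Zpart i) (f : Fin m → ℝ) :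
    ∑ j, f j = ∑ i ∈ T, ∑ j ∈ idxIn S (Zpart i), f j := by
  rw [← Finset.sum_biUnion]
  · congr 1
    ext j
    simpa [mem_idxIn] using hST j
  · intro i _ i' _ hii'
    exact Finset.disjoint_left.2 fun j hj hj' =>
      Set.disjoint_left.1 (hdisj hii') (mem_idxIn.1 hj) (mem_idxIn.1 hj')

lemma mem_biUnion_TS {K : ℕ} {Zpart : Fin K → Set Z} (hcover : ⋃ i, Zpart i = Set.univ)
    (S : Fin m → Z) (j : Fin m) : S j ∈ ⋃ i ∈ TS Zpart S, Zpart i := by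
  obtain ⟨i, hi⟩ := Set.mem_iUnion.1 (hcover ▸ Set.mem_univ (S j))
  exact Set.mem_biUnion (by simpa [TS] using ⟨j, mem_idxIn.2 hi⟩) hi

lemma card_div_mul_inv_card_mul_sum {α : Type*} (B : Finset α) (f : α → ℝ) (x : ℝ) :
    (B.card : ℝ) / x * ((B.card : ℝ)⁻¹ * ∑ j ∈ B, f j) = x⁻¹ * ∑ j ∈ B, f j := by
  rcases B.eq_empty_or_nonempty with rfl | hB
  · simp
  · have : (B.card : ℝ) ≠ 0 := by positivity
    field_simp

lemma sum_card_div_mul_empLoss (hdisj : Pairwise (Function.onFun Disjoint Zpart))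
    {T : Finset ι} {S : Fin m → Z} (hST : ∀ j, S j ∈ ⋃ i ∈ T, Zpart i) (ℓ : Z → ℝ) :
    ∑ i ∈ T, ((idxIn S (Zpart i)).card : ℝ) / m * empLoss ℓ S (idxIn S (Zpart i))
      = (m : ℝ)⁻¹ * ∑ j, ℓ (S j) := by
  simp only [empLoss, card_div_mul_inv_card_mul_sum, ← Finset.mul_sum,
    ← sum_eq_sum_idxIn hdisj hST]

lemma inv_mul_sum_le_add_tupRob [MeasurableSpace Z] {H : Type*} [NormedAddCommGroup H]
    (hdisj : Pairwise (Function.onFun Disjoint Zpart)) {T : Finset ι} {S : Fin m → Z}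
    (hST : ∀ j, S j ∈ ⋃ i ∈ T, Zpart i) {h : Z → H} {μ : Measure Z} {L : ℝ} {f φ : Z → ℝ}
    (hfφ : ∀ i ∈ T, ∀ s ∈ Zpart i, f s ≤ φ s + L * locRob h μ (Zpart i) s) :
    (m : ℝ)⁻¹ * ∑ j, f (S j) ≤ (m : ℝ)⁻¹ * ∑ j, φ (S j)
      + L * ∑ i ∈ T, ((idxIn S (Zpart i)).card : ℝ) / m
          * tupRob h μ (Zpart i) S (idxIn S (Zpart i)) := by
  simp only [tupRob, card_div_mul_inv_card_mul_sum, ← Finset.mul_sum]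
  rw [mul_left_comm, ← mul_add]
  gcongr
  rw [sum_eq_sum_idxIn hdisj hST (fun j => f (S j)), sum_eq_sum_idxIn hdisj hST (fun j => φ (S j)),
    Finset.mul_sum, ← Finset.sum_add_distrib]
  gcongr with i hi
  rw [Finset.mul_sum, ← Finset.sum_add_distrib]
  exact Finset.sum_le_sum fun j hj => hfφ i hi _ (mem_idxIn.1 hj)

lemma empLoss_le_empLoss_add_disc {H : Type*} [NormedAddCommGroup H] {h : Z → H} {ℓ : Z → ℝ}
    {L : ℝ} (hLip : ∀ s u, |ℓ s - ℓ u| ≤ L * ‖h s - h u‖) {k : ℕ} {G : Fin k → Z}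
    {BG : Finset (Fin k)} {S : Fin m → Z} {BS : Finset (Fin m)} (hG : BG.Nonempty)
    (hS : BS.Nonempty) : empLoss ℓ S BS ≤ empLoss ℓ G BG + L * disc h G BG S BS := by
  have hGc : (BG.card : ℝ) ≠ 0 := by positivity
  have hSc : (BS.card : ℝ) ≠ 0 := by positivity
  have hpair : ∑ u ∈ BG, ∑ s ∈ BS, ℓ (S s)
      ≤ ∑ u ∈ BG, ∑ s ∈ BS, (ℓ (G u) + L * ‖h (S s) - h (G u)‖) :=
    Finset.sum_le_sum fun u _ => Finset.sum_le_sum fun s _ => by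
      linarith [(abs_le.1 (hLip (S s) (G u))).2]
  simp only [Finset.sum_add_distrib, Finset.sum_const, nsmul_eq_mul, ← Finset.mul_sum,
    Finset.sum_comm (s := BG) (t := BS) (f := fun u s => ℓ (S s))] at hpair
  calc empLoss ℓ S BS
      = ((BG.card : ℝ) * BS.card)⁻¹ * (BG.card * ∑ s ∈ BS, ℓ (S s)) := by
        unfold empLoss; field_simp
    _ ≤ ((BG.card : ℝ) * BS.card)⁻¹ * (BS.card * ∑ u ∈ BG, ℓ (G u)
          + L * ∑ u ∈ BG, ∑ s ∈ BS, ‖h (S s) - h (G u)‖) := by gcongr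
    _ = empLoss ℓ G BG + L * disc h G BG S BS := by
        unfold empLoss disc; field_simp

end Empirical

lemma le_real_synthetic_bound_of_avg_le {Z H : Type*} [MeasurableSpace Z] [NormedAddCommGroup H]
    {K : ℕ} {Zpart : Fin K → Set Z} (hdisj : Pairwise (Function.onFun Disjoint Zpart))
    (hcover : ⋃ i, Zpart i = Set.univ) {h : Z → H} {ℓ : Z → ℝ} {L : ℝ}
    (hLip : ∀ s u, |ℓ s - ℓ u| ≤ L * ‖h s - h u‖) {P0 Pg : Measure Z} {ψ0 ψg : Z → ℝ}
    (hψ0 : ∀ i, ∀ s ∈ Zpart i, ψ0 s ≤ ℓ s + L * locRob h P0 (Zpart i) s)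
    (hψg : ∀ i, ∀ s ∈ Zpart i, ℓ s ≤ ψg s + L * locRob h Pg (Zpart i) s)
    {n g : ℕ} {S : Fin n → Z} {G : Fin g → Z} {x0 xg e0 eg : ℝ}
    (hS : x0 ≤ (n : ℝ)⁻¹ * ∑ j, ψ0 (S j) + e0) (hG : (g : ℝ)⁻¹ * ∑ j, ψg (G j) ≤ xg + eg)
    (hGT : ∀ j, G j ∈ ⋃ i ∈ TS Zpart S, Zpart i)
    (hGpos : ∀ i ∈ TS Zpart S, 0 < (idxIn G (Zpart i)).card) :
    x0 ≤ L * ∑ i ∈ TS Zpart S, ((idxIn G (Zpart i)).card : ℝ) / (g : ℝ)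
            * (disc h G (idxIn G (Zpart i)) S (idxIn S (Zpart i))
               + tupRob h Pg (Zpart i) G (idxIn G (Zpart i)))
      + xg
      + ∑ i ∈ TS Zpart S, (((idxIn S (Zpart i)).card : ℝ) / (n : ℝ)
            - ((idxIn G (Zpart i)).card : ℝ) / (g : ℝ)) * empLoss ℓ S (idxIn S (Zpart i))
      + L * ∑ i ∈ TS Zpart S, ((idxIn S (Zpart i)).card : ℝ) / (n : ℝ)
            * tupRob h P0 (Zpart i) S (idxIn S (Zpart i))
      + (e0 + eg) := by
  set T := TS Zpart S
  have hST := mem_biUnion_TS hcover S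
  have hSside := inv_mul_sum_le_add_tupRob hdisj hST fun i _ => hψ0 i
  rw [← sum_card_div_mul_empLoss hdisj hST ℓ] at hSside
  have hGside := inv_mul_sum_le_add_tupRob hdisj hGT fun i _ => hψg i
  rw [← sum_card_div_mul_empLoss hdisj hGT ℓ] at hGside
  have htransfer : ∑ i ∈ T, ((idxIn G (Zpart i)).card : ℝ) / g * empLoss ℓ S (idxIn S (Zpart i))
      ≤ ∑ i ∈ T, ((idxIn G (Zpart i)).card : ℝ) / g * empLoss ℓ G (idxIn G (Zpart i))
        + L * ∑ i ∈ T, ((idxIn G (Zpart i)).card : ℝ) / g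
          * disc h G (idxIn G (Zpart i)) S (idxIn S (Zpart i)) := by
    rw [mul_sum, ← sum_add_distrib]
    gcongr with i hi
    rw [mul_left_comm, ← mul_add]
    gcongr
    exact empLoss_le_empLoss_add_disc hLip (card_pos.1 (hGpos i hi)) (by simpa [T, TS] using hi)
  simp only [mul_add, sub_mul, sum_add_distrib, sum_sub_distrib]
  linarith

theorem generalization_bound_real_and_synthetic_general {Z : Type*} [MeasurableSpace Z] {H : Type*} [NormedAddCommGroup H]
    [MeasurableSpace H] [BorelSpace H]
    (K : ℕ) (Zpart : Fin K → Set Z)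
    (hZmeas : ∀ i, MeasurableSet (Zpart i))
    (hZdisj : Pairwise (Function.onFun Disjoint Zpart))
    (hZcover : ⋃ i, Zpart i = Set.univ)
    (h : Z → H) (hh : Measurable h)
    (ℓ : Z → ℝ) (hℓ : Measurable ℓ) (L C : ℝ)
    (hℓ0 : ∀ z, 0 ≤ ℓ z) (hℓC : ∀ z, ℓ z ≤ C)
    (hLip : ∀ s u, |ℓ s - ℓ u| ≤ L * ‖h s - h u‖)
    (P0 Pg : Measure Z) [IsProbabilityMeasure P0] [IsProbabilityMeasure Pg]
    (hP0 : ∀ i, 0 < P0 (Zpart i)) (hPg : ∀ i, 0 < Pg (Zpart i))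
    (n g : ℕ) (hn : 1 ≤ n) (hg : 1 ≤ g) (δ : ℝ) (hδ : 0 < δ) :
    1 - ENNReal.ofReal δ ≤
      ((Measure.pi (fun _ : Fin n => P0)).prod (Measure.pi (fun _ : Fin g => Pg)))
        {SG : (Fin n → Z) × (Fin g → Z) |
          (∀ j, SG.2 j ∈ ⋃ i ∈ TS Zpart SG.1, Zpart i) →
          (∀ i ∈ TS Zpart SG.1, 0 < (idxIn SG.2 (Zpart i)).card) →
          ∫ z, ℓ z ∂P0 ≤
            L * ∑ i ∈ TS Zpart SG.1,
                ((idxIn SG.2 (Zpart i)).card : ℝ) / (g : ℝ)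
                  * (disc h SG.2 (idxIn SG.2 (Zpart i)) SG.1 (idxIn SG.1 (Zpart i))
                     + tupRob h Pg (Zpart i) SG.2 (idxIn SG.2 (Zpart i)))
            + (∫ z, ℓ z ∂Pg)
            + ∑ i ∈ TS Zpart SG.1,
                (((idxIn SG.1 (Zpart i)).card : ℝ) / (n : ℝ)
                  - ((idxIn SG.2 (Zpart i)).card : ℝ) / (g : ℝ))
                  * empLoss ℓ SG.1 (idxIn SG.1 (Zpart i))
            + L * ∑ i ∈ TS Zpart SG.1,
                ((idxIn SG.1 (Zpart i)).card : ℝ) / (n : ℝ)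
                  * tupRob h P0 (Zpart i) SG.1 (idxIn SG.1 (Zpart i))
            + C * (1 / Real.sqrt n + 1 / Real.sqrt g)
                * Real.sqrt (2 * K * Real.log 2 + 2 * Real.log (2 / δ))} := by
  rcases le_or_gt 2 δ with hδ2 | hδ2
  · rw [tsub_eq_zero_of_le (ENNReal.one_le_ofReal.2 (by linarith))]
    exact zero_le
  set E := 2 * K * log 2 + 2 * log (2 / δ)
  have hlog : 0 ≤ log (2 / δ) := log_nonneg (by rw [le_div_iff₀ hδ]; linarith)
  have hK2 : 0 ≤ K * log 2 := by positivity
  have hE : 0 ≤ E := by linarith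
  have hEδ : log (2 / δ) ≤ 2 * E := by linarith
  have hab : ∀ z, ℓ z ∈ Set.Icc 0 C := fun z => ⟨hℓ0 z, hℓC z⟩
  have hP0' : ∀ i, P0 (Zpart i) ≠ 0 := fun i => (hP0 i).ne'
  have hPg' : ∀ i, Pg (Zpart i) ≠ 0 := fun i => (hPg i).ne'
  have hψ0 : ∀ i, ∀ s ∈ Zpart i,
      partitionLoss h ℓ P0 Zpart s ≤ ℓ s + L * locRob h P0 (Zpart i) s := fun i s hs => by
    linarith [abs_le.1 (abs_partitionLoss_sub_le hh hZdisj hP0' hℓ hab hLip hs)]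
  have hψg : ∀ i, ∀ s ∈ Zpart i,
      ℓ s ≤ partitionLoss h ℓ Pg Zpart s + L * locRob h Pg (Zpart i) s := fun i s hs => by
    linarith [abs_le.1 (abs_partitionLoss_sub_le hh hZdisj hPg' hℓ hab hLip hs)]
  have hA := (measure_pi_integral_sub_avg_gt_le P0 (measurable_partitionLoss (h := h) hZmeas hℓ)
    (partitionLoss_mem_Icc hZdisj hZcover hP0' hℓ hab) hn (ε := √E / √n) (by positivity)).trans
    (ofReal_exp_neg_two_mul_sq_le hn hE hδ hEδ)
  have hB := (measure_pi_avg_sub_integral_gt_le Pg (measurable_partitionLoss (h := h) hZmeas hℓ)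
    (partitionLoss_mem_Icc hZdisj hZcover hPg' hℓ hab) hg (ε := √E / √g) (by positivity)).trans
    (ofReal_exp_neg_two_mul_sq_le hg hE hδ hEδ)
  rw [integral_partitionLoss hZmeas hZdisj hZcover hP0' hℓ hab, sub_zero] at hA
  rw [integral_partitionLoss hZmeas hZdisj hZcover hPg' hℓ hab, sub_zero] at hB
  rw [← add_halves δ, ENNReal.ofReal_add (by positivity) (by positivity)]
  refine (tsub_le_tsub_left (add_le_add hA hB) 1).trans (one_sub_add_le_prod_apply ?_)
  intro S G hS hG hGT hGpos
  simp only [Set.mem_ofPred_eq, not_lt] at hS hG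
  rw [show C * (1 / √n + 1 / √g) * √E = C * (√E / √n) + C * (√E / √g) by ring]
  exact le_real_synthetic_bound_of_avg_le hZdisj hZcover hLip hψ0 hψg (by linarith) (by linarith)
    hGT hGpos

theorem generalization_bound_real_and_synthetic {Z : Type*} [MeasurableSpace Z] {H : Type*} [NormedAddCommGroup H]
    [NormedSpace ℝ H] [MeasurableSpace H] [BorelSpace H]
    (K : ℕ) (hK : 1 ≤ K) (Zpart : Fin K → Set Z)
    (hZmeas : ∀ i, MeasurableSet (Zpart i))
    (hZne : ∀ i, (Zpart i).Nonempty)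
    (hZdisj : Pairwise (Function.onFun Disjoint Zpart))
    (hZcover : ⋃ i, Zpart i = Set.univ)
    (h : Z → H) (hh : Measurable h)
    (ℓ : Z → ℝ) (hℓ : Measurable ℓ) (L C : ℝ)
    (hℓ0 : ∀ z, 0 ≤ ℓ z) (hℓC : ∀ z, ℓ z ≤ C)
    (hLip : ∀ s u, |ℓ s - ℓ u| ≤ L * ‖h s - h u‖)
    (P0 Pg : Measure Z) [IsProbabilityMeasure P0] [IsProbabilityMeasure Pg]
    (hP0 : ∀ i, 0 < P0 (Zpart i)) (hPg : ∀ i, 0 < Pg (Zpart i))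
    (n g : ℕ) (hn : 1 ≤ n) (hg : 1 ≤ g) (δ : ℝ) (hδ : 0 < δ) :
    1 - ENNReal.ofReal δ ≤
      ((Measure.pi (fun _ : Fin n => P0)).prod (Measure.pi (fun _ : Fin g => Pg)))
        {SG : (Fin n → Z) × (Fin g → Z) |
          (∀ j, SG.2 j ∈ ⋃ i ∈ TS Zpart SG.1, Zpart i) →
          (∀ i ∈ TS Zpart SG.1, 0 < (idxIn SG.2 (Zpart i)).card) →
          ∫ z, ℓ z ∂P0 ≤
            L * ∑ i ∈ TS Zpart SG.1,
                ((idxIn SG.2 (Zpart i)).card : ℝ) / (g : ℝ)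
                  * (disc h SG.2 (idxIn SG.2 (Zpart i)) SG.1 (idxIn SG.1 (Zpart i))
                     + tupRob h Pg (Zpart i) SG.2 (idxIn SG.2 (Zpart i)))
            + (∫ z, ℓ z ∂Pg)
            + ∑ i ∈ TS Zpart SG.1,
                (((idxIn SG.1 (Zpart i)).card : ℝ) / (n : ℝ)
                  - ((idxIn SG.2 (Zpart i)).card : ℝ) / (g : ℝ))
                  * empLoss ℓ SG.1 (idxIn SG.1 (Zpart i))
            + L * ∑ i ∈ TS Zpart SG.1,
                ((idxIn SG.1 (Zpart i)).card : ℝ) / (n : ℝ)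
                  * tupRob h P0 (Zpart i) SG.1 (idxIn SG.1 (Zpart i))
            + C * (1 / Real.sqrt n + 1 / Real.sqrt g)
                * Real.sqrt (2 * K * Real.log 2 + 2 * Real.log (2 / δ))} :=
  generalization_bound_real_and_synthetic_general K Zpart hZmeas hZdisj hZcover h hh ℓ hℓ L C hℓ0
    hℓC hLip P0 Pg hP0 hPg n g hn hg δ hδ
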